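/- arXiv:2510.22124 — 6 statements merged into one kernel-verified Lean document; each statement's English description precedes it below -/
import Mathlib

section
/- Let g_u, g_r ∈ ℝ^n with g_r ≠ 0, and let ε ≥ 0. Define λ* = (−⟨g_r, g_u⟩ − ε)/‖g_r‖². Then the function d ↦ ⟨g_u, d⟩ − (1/2)‖d‖² attains its maximum over the half-space {d ∈ ℝ^n : ⟨g_r, d⟩ ≥ −ε} at the unique point d* given by d* = g_u + λ* g_r if λ* > 0, and d* = g_u if λ* ≤ 0. -/
open scoped RealInnerProductSpace BigOperators

/-- For `g_u, g_r ∈ ℝⁿ` with `g_r ≠ 0` and `ε ≥ 0`, with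
`λ* = (−⟨g_r, g_u⟩ − ε)/‖g_r‖²`, the function `d ↦ ⟨g_u, d⟩ − (1/2)‖d‖²` attains
its maximum over the half-space `{d : ⟨g_r, d⟩ ≥ −ε}` at the unique point
`d* = g_u + λ* g_r` if `λ* > 0`, and `d* = g_u` if `λ* ≤ 0`. -/
theorem halfspace_max_closed_form {n : ℕ} (gu gr : EuclideanSpace ℝ (Fin n))
    (hgr : gr ≠ 0) (ε : ℝ) (hε : 0 ≤ ε) :
    ∀ lamStar : ℝ, lamStar = (-⟪gr, gu⟫ - ε) / ‖gr‖ ^ 2 →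
    ∀ dStar : EuclideanSpace ℝ (Fin n),
      dStar = (if 0 < lamStar then gu + lamStar • gr else gu) →
      ⟪gr, dStar⟫ ≥ -ε ∧
      (∀ d : EuclideanSpace ℝ (Fin n), ⟪gr, d⟫ ≥ -ε →
        ⟪gu, d⟫ - (1 / 2) * ‖d‖ ^ 2 ≤ ⟪gu, dStar⟫ - (1 / 2) * ‖dStar‖ ^ 2) ∧
      (∀ d : EuclideanSpace ℝ (Fin n), ⟪gr, d⟫ ≥ -ε →
        ⟪gu, d⟫ - (1 / 2) * ‖d‖ ^ 2 = ⟪gu, dStar⟫ - (1 / 2) * ‖dStar‖ ^ 2 →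
        d = dStar) := by
  intro lam hlam dStar hd
  have hgr2 : (0:ℝ) < ‖gr‖ ^ 2 := by
    have := norm_pos_iff.mpr hgr
    positivity
  -- completing the square
  have key : ∀ d : EuclideanSpace ℝ (Fin n),
      ⟪gu, d⟫ - (1/2) * ‖d‖ ^ 2 = (1/2) * ‖gu‖ ^ 2 - (1/2) * ‖d - gu‖ ^ 2 := by
    intro d
    rw [norm_sub_sq_real, real_inner_comm]
    ring
  by_cases hpos : 0 < lam
  · rw [if_pos hpos] at hd
    subst hd
    have hfeas : ⟪gr, gu + lam • gr⟫ = -ε := by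
      rw [inner_add_right, real_inner_smul_right, real_inner_self_eq_norm_sq, hlam]
      field_simp
      ring
    have hdist : ∀ d : EuclideanSpace ℝ (Fin n), ⟪gr, d⟫ ≥ -ε →
        ‖lam • gr‖ ^ 2 + ‖d - (gu + lam • gr)‖ ^ 2 ≤ ‖d - gu‖ ^ 2 := by
      intro d hdfeas
      have hdecomp : d - gu = (d - (gu + lam • gr)) + lam • gr := by abel
      have hcross : (0:ℝ) ≤ ⟪d - (gu + lam • gr), lam • gr⟫ := by
        rw [real_inner_comm, real_inner_smul_left, inner_sub_right, hfeas]
        exact mul_nonneg hpos.le (by linarith)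
      have hexp : ‖d - gu‖ ^ 2 =
          ‖d - (gu + lam • gr)‖ ^ 2 + 2 * ⟪d - (gu + lam • gr), lam • gr⟫
            + ‖lam • gr‖ ^ 2 := by
        rw [hdecomp, norm_add_sq_real]
      linarith
    refine ⟨ge_of_eq hfeas, ?_, ?_⟩
    · intro d hdfeas
      have h1 := hdist d hdfeas
      have h2 : ‖(gu + lam • gr) - gu‖ = ‖lam • gr‖ := by
        congr 1; abel
      have h3 : (0:ℝ) ≤ ‖d - (gu + lam • gr)‖ ^ 2 := by positivity
      rw [key d, key (gu + lam • gr), h2]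
      linarith
    · intro d hdfeas heq
      have h1 := hdist d hdfeas
      have h2 : ‖(gu + lam • gr) - gu‖ = ‖lam • gr‖ := by
        congr 1; abel
      rw [key d, key (gu + lam • gr), h2] at heq
      have h4 : ‖d - (gu + lam • gr)‖ ^ 2 ≤ 0 := by linarith
      have h5 : ‖d - (gu + lam • gr)‖ = 0 := by
        nlinarith [norm_nonneg (d - (gu + lam • gr))]
      have := norm_eq_zero.mp h5
      exact sub_eq_zero.mp this
  · rw [if_neg hpos] at hd
    rw [hd]
    have hlamle : lam ≤ 0 := le_of_not_gt hpos
    have hfeas : ⟪gr, gu⟫ ≥ -ε := by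
      rw [hlam] at hlamle
      have := (div_nonpos_iff.mp hlamle)
      rcases this with ⟨h1, h2⟩ | ⟨h1, h2⟩
      · linarith
      · linarith
    refine ⟨hfeas, ?_, ?_⟩
    · intro d hdfeas
      rw [key d, key gu]
      have : (0:ℝ) ≤ ‖d - gu‖ ^ 2 := by positivity
      simp only [sub_self, norm_zero]
      nlinarith
    · intro d hdfeas heq
      rw [key d, key gu] at heq
      simp only [sub_self, norm_zero] at heq
      have h4 : ‖d - gu‖ ^ 2 = 0 := by nlinarith
      have h5 : ‖d - gu‖ = 0 := by
        nlinarith [norm_nonneg (d - gu)]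
      exact sub_eq_zero.mp (norm_eq_zero.mp h5)
end

section
/- Let g_u, g_r ∈ ℝ^n with g_r ≠ 0, and let ε ≥ 0. Then strong duality holds for the utility-preserving direction problem: the maximum of ⟨g_u, d⟩ − (1/2)‖d‖² over {d ∈ ℝ^n : ⟨g_r, d⟩ ≥ −ε} equals the minimum over λ ∈ [0, ∞) of (1/2)‖g_u + λ g_r‖² + λ ε. -/
open scoped RealInnerProductSpace

/-!
For `λ ≥ 0` the Lagrangian `⟪g_u, d⟫ - ½‖d‖² + λ (⟪g_r, d⟫ + ε)` equals
`½‖g_u + λ g_r‖² + λ ε - ½‖g_u + λ g_r - d‖²`. On feasible `d` the multiplier term is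
nonnegative, which gives weak duality. With `λ = max 0 (-(⟪g_r, g_u⟫ + ε) / ‖g_r‖²)`, the point
`d = g_u + λ g_r` (the projection of `g_u` onto the feasible half-space) is feasible with
`λ (⟪g_r, d⟫ + ε) = 0`, so there the primal and dual values coincide.
-/

namespace DirectionProblem

variable {E : Type*} [NormedAddCommGroup E] [InnerProductSpace ℝ E]

theorem lagrangian_eq (u r d : E) (ε lam : ℝ) :
    ⟪u, d⟫ - (1 / 2) * ‖d‖ ^ 2 + lam * (⟪r, d⟫ + ε) =
      (1 / 2) * ‖u + lam • r‖ ^ 2 + lam * ε - (1 / 2) * ‖u + lam • r - d‖ ^ 2 := by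
  rw [norm_sub_sq_real, inner_add_left, real_inner_smul_left]
  ring

theorem weak_duality {u r d : E} {ε lam : ℝ} (hlam : 0 ≤ lam) (hd : -ε ≤ ⟪r, d⟫) :
    ⟪u, d⟫ - (1 / 2) * ‖d‖ ^ 2 ≤ (1 / 2) * ‖u + lam • r‖ ^ 2 + lam * ε := by
  have hslack : 0 ≤ lam * (⟪r, d⟫ + ε) := mul_nonneg hlam (by linarith)
  nlinarith [lagrangian_eq u r d ε lam, sq_nonneg ‖u + lam • r - d‖]

theorem primal_eq_dual_of_slackness {u r : E} {ε lam : ℝ}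
    (hslack : lam * (⟪r, u + lam • r⟫ + ε) = 0) :
    ⟪u, u + lam • r⟫ - (1 / 2) * ‖u + lam • r‖ ^ 2 =
      (1 / 2) * ‖u + lam • r‖ ^ 2 + lam * ε := by
  have h := lagrangian_eq u r (u + lam • r) ε lam
  rw [sub_self, norm_zero, hslack] at h
  linarith

theorem exists_multiplier (u : E) {r : E} (hr : r ≠ 0) (ε : ℝ) :
    ∃ lam : ℝ, 0 ≤ lam ∧ -ε ≤ ⟪r, u + lam • r⟫ ∧ lam * (⟪r, u + lam • r⟫ + ε) = 0 := by
  have hr2 : 0 < ‖r‖ ^ 2 := by positivity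
  have hinner (lam : ℝ) : ⟪r, u + lam • r⟫ = ⟪r, u⟫ + lam * ‖r‖ ^ 2 := by
    rw [inner_add_right, real_inner_smul_right, real_inner_self_eq_norm_sq]
  by_cases hu : -ε ≤ ⟪r, u⟫
  · exact ⟨0, le_rfl, by simpa using hu, zero_mul _⟩
  · refine ⟨-(⟪r, u⟫ + ε) / ‖r‖ ^ 2, div_nonneg (by linarith) hr2.le, ?_⟩
    have hactive : ⟪r, u + (-(⟪r, u⟫ + ε) / ‖r‖ ^ 2) • r⟫ = -ε := by
      rw [hinner, div_mul_cancel₀ _ hr2.ne']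
      ring
    exact ⟨hactive.ge, by rw [hactive, neg_add_cancel, mul_zero]⟩

end DirectionProblem

open DirectionProblem in
theorem strong_duality_direction_problem_general {n : ℕ}
    (gu gr : EuclideanSpace ℝ (Fin n)) (hgr : gr ≠ 0) (ε : ℝ) :
    ∃ v : ℝ,
      IsGreatest ((fun d : EuclideanSpace ℝ (Fin n) =>
          ⟪gu, d⟫ - (1 / 2) * ‖d‖ ^ 2) ''
        {d : EuclideanSpace ℝ (Fin n) | ⟪gr, d⟫ ≥ -ε}) v ∧
      IsLeast ((fun lam : ℝ =>
          (1 / 2) * ‖gu + lam • gr‖ ^ 2 + lam * ε) '' Set.Ici 0) v := by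
  obtain ⟨lam, hlam, hfeas, hslack⟩ := exists_multiplier gu hgr ε
  have hval := primal_eq_dual_of_slackness hslack
  refine ⟨_, ⟨⟨gu + lam • gr, hfeas, rfl⟩, ?_⟩, ⟨⟨lam, hlam, hval.symm⟩, ?_⟩⟩
  · rintro _ ⟨d, hd, rfl⟩
    exact (weak_duality hlam hd).trans_eq hval.symm
  · rintro _ ⟨mu, hmu, rfl⟩
    exact weak_duality hmu hfeas

/-- Strong duality for the utility-preserving direction problem:
the maximum of `⟨g_u, d⟩ − (1/2)‖d‖²` over `{d : ⟨g_r, d⟩ ≥ −ε}` equals the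
minimum over `λ ∈ [0, ∞)` of `(1/2)‖g_u + λ g_r‖² + λ ε`. -/
theorem strong_duality_direction_problem {n : ℕ}
    (gu gr : EuclideanSpace ℝ (Fin n)) (hgr : gr ≠ 0) (ε : ℝ) (hε : 0 ≤ ε) :
    ∃ v : ℝ,
      IsGreatest ((fun d : EuclideanSpace ℝ (Fin n) =>
          ⟪gu, d⟫ - (1 / 2) * ‖d‖ ^ 2) ''
        {d : EuclideanSpace ℝ (Fin n) | ⟪gr, d⟫ ≥ -ε}) v ∧
      IsLeast ((fun lam : ℝ =>
          (1 / 2) * ‖gu + lam • gr‖ ^ 2 + lam * ε) '' Set.Ici 0) v :=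
  strong_duality_direction_problem_general gu gr hgr ε
end

section
/- Let ℓ_r : ℝ^n → ℝ be differentiable and G-smooth. Let t ≥ 1, let α_0, …, α_{t−1} > 0, ε_0, …, ε_{t−1} ≥ 0, and let θ_0, …, θ_t ∈ ℝ^n and d_0, …, d_{t−1} ∈ ℝ^n satisfy θ_{i+1} = θ_i − α_i d_i and ⟨∇ℓ_r(θ_i), d_i⟩ ≥ −ε_i for all i = 0, …, t−1. Then ℓ_r(θ_t) − ℓ_r(θ_0) ≤ Σ_{i=0}^{t−1} ( α_i ε_i + (G α_i²/2) ‖d_i‖² ). -/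
/-!
Along the segment from `x` to `y`, the derivative of `s ↦ f (x + s • (y - x))` exceeds its
value at `0` by at most `G s ‖y - x‖²`, so comparing with the quadratic having that derivative
gives the descent lemma `f y ≤ f x + ⟪∇f x, y - x⟫ + G/2 ‖y - x‖²`. For the step
`y = θᵢ - αᵢ dᵢ` the linear term is `-αᵢ ⟪∇f θᵢ, dᵢ⟫ ≤ αᵢ εᵢ`, and the bound telescopes.
-/

open scoped RealInnerProductSpace
open Set

theorem sub_le_deriv_mul_add_of_deriv_le {φ φ' : ℝ → ℝ} {a b C : ℝ} (hab : a ≤ b)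
    (hφ : ∀ s ∈ Icc a b, HasDerivAt φ (φ' s) s)
    (hφ' : ∀ s ∈ Ico a b, φ' s ≤ φ' a + C * (s - a)) :
    φ b - φ a ≤ φ' a * (b - a) + C / 2 * (b - a) ^ 2 := by
  let B : ℝ → ℝ := fun s => φ a + (φ' a * (s - a) + C / 2 * (s - a) ^ 2)
  have hB : ∀ s, HasDerivAt B (φ' a + C * (s - a)) s := fun s => by
    have h := (hasDerivAt_id s).sub_const a
    exact (((h.const_mul (φ' a)).add ((h.pow 2).const_mul (C / 2))).const_add (φ a)).congr_deriv
      (by simp; ring)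
  have hle := image_le_of_deriv_right_le_deriv_boundary
    (fun s hs => (hφ s hs).continuousAt.continuousWithinAt)
    (fun s hs => (hφ s (Ico_subset_Icc_self hs)).hasDerivWithinAt) (by simp [B])
    (fun s _ => (hB s).continuousAt.continuousWithinAt) (fun s _ => (hB s).hasDerivWithinAt)
    hφ' (right_mem_Icc.2 hab)
  simp only [B] at hle
  linarith

theorem sub_le_fderiv_add_of_norm_fderiv_sub_le {E : Type*} [NormedAddCommGroup E]
    [NormedSpace ℝ E] {f : E → ℝ} {f' : E → E →L[ℝ] ℝ} {G : ℝ}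
    (hf : ∀ x, HasFDerivAt f (f' x) x) (hf' : ∀ x y, ‖f' x - f' y‖ ≤ G * ‖x - y‖) (x y : E) :
    f y - f x ≤ f' x (y - x) + G / 2 * ‖y - x‖ ^ 2 := by
  obtain ⟨v, rfl⟩ : ∃ v, y = x + v := ⟨y - x, by abel⟩
  have hline : ∀ s : ℝ, HasDerivAt (fun s : ℝ => x + s • v) v s := fun s => by
    simpa using ((hasDerivAt_id s).smul_const v).const_add x
  have hφ' : ∀ s ∈ Ico (0 : ℝ) 1, f' (x + s • v) v ≤ f' x v + G * ‖v‖ ^ 2 * s := by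
    rintro s ⟨hs, -⟩
    calc f' (x + s • v) v = f' x v + (f' (x + s • v) - f' x) v := by simp
      _ ≤ f' x v + ‖f' (x + s • v) - f' x‖ * ‖v‖ := by
          gcongr; exact (le_abs_self _).trans ((f' (x + s • v) - f' x).le_opNorm v)
      _ ≤ f' x v + G * ‖s • v‖ * ‖v‖ := by
          gcongr; simpa using hf' (x + s • v) x
      _ = _ := by simp [norm_smul, abs_of_nonneg hs]; ring
  have key := sub_le_deriv_mul_add_of_deriv_le (φ := fun s => f (x + s • v)) zero_le_one
    (fun s _ => (hf (x + s • v)).comp_hasDerivAt s (hline s)) (by simpa using hφ')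
  simp only [zero_smul, add_zero, one_smul, sub_zero, one_pow, mul_one] at key
  simp only [add_sub_cancel_left]
  linarith

theorem sub_le_inner_add_of_norm_gradient_sub_le {E : Type*} [NormedAddCommGroup E]
    [InnerProductSpace ℝ E] [CompleteSpace E] {f : E → ℝ} {g : E → E} {G : ℝ}
    (hf : ∀ x, HasGradientAt f (g x) x) (hg : ∀ x y, ‖g x - g y‖ ≤ G * ‖x - y‖) (x y : E) :
    f y - f x ≤ ⟪g x, y - x⟫ + G / 2 * ‖y - x‖ ^ 2 :=
  sub_le_fderiv_add_of_norm_fderiv_sub_le (fun x => (hf x).hasFDerivAt)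
    (fun x y => by simpa only [← map_sub, LinearIsometryEquiv.norm_map] using hg x y) x y

theorem image_sub_smul_sub_image_le {E : Type*} [NormedAddCommGroup E]
    [InnerProductSpace ℝ E] [CompleteSpace E] {f : E → ℝ} {g : E → E} {G : ℝ}
    (hf : ∀ x, HasGradientAt f (g x) x) (hg : ∀ x y, ‖g x - g y‖ ≤ G * ‖x - y‖)
    {x d : E} {α ε : ℝ} (hα : 0 ≤ α) (hd : -ε ≤ ⟪g x, d⟫) :
    f (x - α • d) - f x ≤ α * ε + G * α ^ 2 / 2 * ‖d‖ ^ 2 := by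
  have h := sub_le_inner_add_of_norm_gradient_sub_le hf hg x (x - α • d)
  rw [sub_sub_cancel_left, inner_neg_right, real_inner_smul_right, norm_neg, norm_smul,
    Real.norm_of_nonneg hα] at h
  nlinarith [mul_le_mul_of_nonneg_left hd hα]

theorem retain_loss_total_bound_general {n : ℕ}
    (ℓr : EuclideanSpace ℝ (Fin n) → ℝ)
    (gradr : EuclideanSpace ℝ (Fin n) → EuclideanSpace ℝ (Fin n)) (G : ℝ)
    (hgrad : ∀ x, HasGradientAt ℓr (gradr x) x)
    (hsmooth : ∀ x y, ‖gradr x - gradr y‖ ≤ G * ‖x - y‖)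
    (t : ℕ) (α ε : ℕ → ℝ)
    (θ d : ℕ → EuclideanSpace ℝ (Fin n))
    (hα : ∀ i < t, 0 < α i)
    (hupd : ∀ i < t, θ (i + 1) = θ i - α i • d i)
    (hcon : ∀ i < t, ⟪gradr (θ i), d i⟫ ≥ -(ε i)) :
    ℓr (θ t) - ℓr (θ 0)
      ≤ ∑ i ∈ Finset.range t, (α i * ε i + (G * α i ^ 2 / 2) * ‖d i‖ ^ 2) := by
  rw [← Finset.sum_range_sub (fun i => ℓr (θ i))]
  refine Finset.sum_le_sum fun i hi => ?_
  have hi : i < t := Finset.mem_range.mp hi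
  rw [hupd i hi]
  exact image_sub_smul_sub_image_le hgrad hsmooth (hα i hi).le (hcon i hi)

/-- If `ℓ_r` is differentiable with `G`-Lipschitz gradient, and
iterates satisfy `θ_{i+1} = θ_i − α_i d_i` with `⟨∇ℓ_r(θ_i), d_i⟩ ≥ −ε_i` for
`i = 0,…,t−1` (with `α_i > 0`, `ε_i ≥ 0`, `t ≥ 1`), then
`ℓ_r(θ_t) − ℓ_r(θ_0) ≤ Σ_{i<t} (α_i ε_i + (G α_i²/2)‖d_i‖²)`. -/
theorem retain_loss_total_bound {n : ℕ}
    (ℓr : EuclideanSpace ℝ (Fin n) → ℝ)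
    (gradr : EuclideanSpace ℝ (Fin n) → EuclideanSpace ℝ (Fin n)) (G : ℝ)
    (hgrad : ∀ x, HasGradientAt ℓr (gradr x) x)
    (hsmooth : ∀ x y, ‖gradr x - gradr y‖ ≤ G * ‖x - y‖)
    (t : ℕ) (ht : 1 ≤ t) (α ε : ℕ → ℝ)
    (θ d : ℕ → EuclideanSpace ℝ (Fin n))
    (hα : ∀ i < t, 0 < α i) (hε : ∀ i < t, 0 ≤ ε i)
    (hupd : ∀ i < t, θ (i + 1) = θ i - α i • d i)
    (hcon : ∀ i < t, ⟪gradr (θ i), d i⟫ ≥ -(ε i)) :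
    ℓr (θ t) - ℓr (θ 0)
      ≤ ∑ i ∈ Finset.range t, (α i * ε i + (G * α i ^ 2 / 2) * ‖d i‖ ^ 2) :=
  retain_loss_total_bound_general ℓr gradr G hgrad hsmooth t α ε θ d hα hupd hcon
end

section
/- Let ℓ_u, ℓ_r : ℝ^n → ℝ be convex, differentiable and G-smooth, with |ℓ_r(θ)| ≤ B for all θ. Let D > 0, t ≥ 1, let λ_0, …, λ_t ∈ [0, D], let β_0, …, β_{t−1} ≥ 0 and ε_0, …, ε_{t−1} ≥ 0 satisfy |λ_{i+1} − λ_i| ≤ β_i (G L + ε_i) for i = 0, …, t−1, and let α > 0 satisfy α (1 + D) G ≤ 1. Define C_λ(θ) = ℓ_u(θ) + λ ℓ_r(θ) and let θ_0, …, θ_t ∈ ℝ^n satisfy θ_{i+1} = θ_i − α ∇C_{λ_i}(θ_i) for i = 0, …, t−1. Then for every θ* ∈ ℝ^n, Σ_{i=1}^{t} C_{λ_i}(θ_i) − Σ_{i=1}^{t} C_{λ_i}(θ*) ≤ B Σ_{i=0}^{t−1} β_i (G L + ε_i) + (1/(2α)) ‖θ_0 − θ*‖² + D B. -/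
open scoped RealInnerProductSpace

open Set Finset

/-!
Each update is a gradient step of size `α` on `C_{λ_i}`, which is convex and `(1 + λ_i) G`-smooth
with `α (1 + λ_i) G ≤ 1`. Convexity plus the descent lemma give the standard one-step bound
`C_{λ_i}(θ_{i+1}) − C_{λ_i}(θ*) ≤ (‖θ_i − θ*‖² − ‖θ_{i+1} − θ*‖²) / (2α)`, which telescopes.
The regret pairs `θ_{i+1}` with `λ_{i+1}` rather than `λ_i`; the mismatch is
`Σ (λ_{i+1} − λ_i) ℓ_r(θ_{i+1}) ≤ B Σ β_i (G L + ε_i)` on the iterates, while on the comparator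
it telescopes to `(λ_t − λ_0) ℓ_r(θ*)`, of size at most `D B`.
-/

section GradientDescent

variable {F : Type*} [NormedAddCommGroup F] [InnerProductSpace ℝ F] [CompleteSpace F]

theorem HasGradientAt.add_const_mul {f h : F → ℝ} {f' h' x : F} (hf : HasGradientAt f f' x)
    (hh : HasGradientAt h h' x) (c : ℝ) :
    HasGradientAt (fun y => f y + c * h y) (f' + c • h') x := by
  rw [hasGradientAt_iff_hasFDerivAt, map_add, map_smul]
  exact hf.hasFDerivAt.add (hh.hasFDerivAt.const_mul c)

theorem HasGradientAt.hasDerivAt_comp_lineMap {f : F → ℝ} {f' x y : F} {s : ℝ}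
    (hf : HasGradientAt f f' (AffineMap.lineMap x y s)) :
    HasDerivAt (f ∘ AffineMap.lineMap x y) ⟪f', y - x⟫ s :=
  hf.hasFDerivAt.comp_hasDerivAt s AffineMap.hasDerivAt_lineMap

theorem ConvexOn.add_inner_le {f : F → ℝ} {f' x : F} (hc : ConvexOn ℝ univ f)
    (hf : HasGradientAt f f' x) (y : F) :
    f x + ⟪f', y - x⟫ ≤ f y := by
  have hline : ConvexOn ℝ univ (f ∘ AffineMap.lineMap (k := ℝ) x y) := hc.comp_affineMap _
  have hderiv : HasDerivAt (f ∘ AffineMap.lineMap (k := ℝ) x y) ⟪f', y - x⟫ 0 :=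
    HasGradientAt.hasDerivAt_comp_lineMap (by rwa [AffineMap.lineMap_apply_zero])
  have := hline.le_slope_of_hasDerivAt (mem_univ 0) (mem_univ 1) one_pos hderiv
  simp only [slope_def_field, Function.comp_apply, AffineMap.lineMap_apply_zero,
    AffineMap.lineMap_apply_one, sub_zero, div_one] at this
  linarith

/-- The descent lemma. -/
theorem le_add_inner_add_of_norm_sub_le {f : F → ℝ} {g : F → F} {C : ℝ}
    (hf : ∀ x, HasGradientAt f (g x) x) (hL : ∀ a b, ‖g a - g b‖ ≤ C * ‖a - b‖) (x y : F) :
    f y ≤ f x + ⟪g x, y - x⟫ + C / 2 * ‖y - x‖ ^ 2 := by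
  set v := y - x
  set ψ : ℝ → ℝ := fun s => f (AffineMap.lineMap x y s) - s * ⟪g x, v⟫ - C * ‖v‖ ^ 2 * s ^ 2 / 2
  have hψ : ∀ s, HasDerivAt ψ (⟪g (AffineMap.lineMap x y s) - g x, v⟫ - C * ‖v‖ ^ 2 * s) s := by
    intro s
    have hline : HasDerivAt (fun s => f (AffineMap.lineMap x y s))
        ⟪g (AffineMap.lineMap x y s), v⟫ s := (hf _).hasDerivAt_comp_lineMap
    have hquad : HasDerivAt (fun s : ℝ => C * ‖v‖ ^ 2 * s ^ 2 / 2) (C * ‖v‖ ^ 2 * s) s :=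
      (((hasDerivAt_pow 2 s).const_mul (C * ‖v‖ ^ 2)).div_const 2).congr_deriv (by ring)
    rw [inner_sub_left]
    exact (hline.sub ((hasDerivAt_id s).mul_const _)).sub hquad |>.congr_deriv (by ring)
  have hψ' : ∀ s ∈ interior (Icc (0 : ℝ) 1), deriv ψ s ≤ 0 := by
    intro s hs
    rw [interior_Icc] at hs
    have hseg : AffineMap.lineMap x y s - x = s • v := by
      rw [AffineMap.lineMap_apply_module']; abel
    have hLs : ‖g (AffineMap.lineMap x y s) - g x‖ ≤ C * (s * ‖v‖) := by
      simpa [hseg, norm_smul, abs_of_pos hs.1] using hL (AffineMap.lineMap x y s) x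
    rw [(hψ s).deriv]
    nlinarith [real_inner_le_norm (g (AffineMap.lineMap x y s) - g x) v,
      mul_le_mul_of_nonneg_right hLs (norm_nonneg v)]
  have hanti := antitoneOn_of_deriv_nonpos (convex_Icc 0 1)
    (fun s _ => (hψ s).continuousAt.continuousWithinAt)
    (fun s _ => (hψ s).differentiableAt.differentiableWithinAt) hψ'
  have h01 : ψ 1 ≤ ψ 0 := hanti (by norm_num) (by norm_num) zero_le_one
  simp only [ψ, AffineMap.lineMap_apply_zero, AffineMap.lineMap_apply_one] at h01
  linarith

theorem sub_le_of_gradient_step {f : F → ℝ} {g : F → F} {C α : ℝ} (hc : ConvexOn ℝ univ f)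
    (hf : ∀ x, HasGradientAt f (g x) x) (hL : ∀ a b, ‖g a - g b‖ ≤ C * ‖a - b‖)
    (hα : 0 < α) (hCα : C * α ≤ 1) (x z : F) :
    f (x - α • g x) - f z ≤ (‖x - z‖ ^ 2 - ‖x - α • g x - z‖ ^ 2) / (2 * α) := by
  have hlower := hc.add_inner_le (hf x) z
  have hdescent := le_add_inner_add_of_norm_sub_le hf hL x (x - α • g x)
  have hstep : x - α • g x - x = -(α • g x) := by abel
  rw [hstep, inner_neg_right, real_inner_smul_right, real_inner_self_eq_norm_sq, norm_neg,
    norm_smul, Real.norm_eq_abs, abs_of_pos hα] at hdescent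
  have hexpand :
      ‖x - α • g x - z‖ ^ 2 = ‖x - z‖ ^ 2 - 2 * α * ⟪g x, x - z⟫ + α ^ 2 * ‖g x‖ ^ 2 := by
    rw [show x - α • g x - z = (x - z) - α • g x by abel, norm_sub_sq_real, real_inner_smul_right,
      norm_smul, Real.norm_eq_abs, abs_of_pos hα, real_inner_comm]
    ring
  have hzx : ⟪g x, z - x⟫ = -⟪g x, x - z⟫ := by rw [← inner_neg_right, neg_sub]
  rw [hexpand, le_div_iff₀ (by positivity)]
  nlinarith [sq_nonneg ‖g x‖]

theorem sum_sub_le_of_gradient_steps {f : ℕ → F → ℝ} {g : ℕ → F → F} {C : ℕ → ℝ} {α : ℝ}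
    {θ : ℕ → F} {t : ℕ} (hc : ∀ i < t, ConvexOn ℝ univ (f i))
    (hf : ∀ i < t, ∀ x, HasGradientAt (f i) (g i x) x)
    (hL : ∀ i < t, ∀ a b, ‖g i a - g i b‖ ≤ C i * ‖a - b‖)
    (hα : 0 < α) (hCα : ∀ i < t, C i * α ≤ 1)
    (hθ : ∀ i < t, θ (i + 1) = θ i - α • g i (θ i)) (z : F) :
    ∑ i ∈ range t, (f i (θ (i + 1)) - f i z) ≤ ‖θ 0 - z‖ ^ 2 / (2 * α) :=
  calc ∑ i ∈ range t, (f i (θ (i + 1)) - f i z)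
      ≤ ∑ i ∈ range t, (‖θ i - z‖ ^ 2 - ‖θ (i + 1) - z‖ ^ 2) / (2 * α) := by
        refine sum_le_sum fun i hi => ?_
        have hi := mem_range.1 hi
        rw [hθ i hi]
        exact sub_le_of_gradient_step (hc i hi) (hf i hi) (hL i hi) hα (hCα i hi) _ z
    _ = (‖θ 0 - z‖ ^ 2 - ‖θ t - z‖ ^ 2) / (2 * α) := by
        rw [← sum_div, sum_range_sub' (fun i => ‖θ i - z‖ ^ 2)]
    _ ≤ ‖θ 0 - z‖ ^ 2 / (2 * α) := by gcongr; exact sub_le_self _ (sq_nonneg _)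

end GradientDescent

theorem norm_add_smul_sub_add_smul_le {E : Type*} [SeminormedAddCommGroup E] [NormedSpace ℝ E]
    {u r : E → E} {G c : ℝ} (hc : 0 ≤ c) (hu : ∀ x y, ‖u x - u y‖ ≤ G * ‖x - y‖)
    (hr : ∀ x y, ‖r x - r y‖ ≤ G * ‖x - y‖) (x y : E) :
    ‖(u x + c • r x) - (u y + c • r y)‖ ≤ (1 + c) * G * ‖x - y‖ :=
  calc ‖(u x + c • r x) - (u y + c • r y)‖ = ‖(u x - u y) + c • (r x - r y)‖ := by
        rw [smul_sub, add_sub_add_comm]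
    _ ≤ ‖u x - u y‖ + c * ‖r x - r y‖ := by
        grw [norm_add_le, norm_smul, Real.norm_of_nonneg hc]
    _ ≤ G * ‖x - y‖ + c * (G * ‖x - y‖) := by gcongr; exacts [hu x y, hr x y]
    _ = (1 + c) * G * ‖x - y‖ := by ring

theorem sum_mul_le_of_abs_le {ι : Type*} {s : Finset ι} {a u b : ι → ℝ} {B : ℝ}
    (ha : ∀ i ∈ s, |a i| ≤ u i) (hb : ∀ i ∈ s, |b i| ≤ B) :
    ∑ i ∈ s, a i * b i ≤ B * ∑ i ∈ s, u i := by
  rw [mul_sum]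
  refine sum_le_sum fun i hi => ?_
  calc a i * b i ≤ |a i| * |b i| := by rw [← abs_mul]; exact le_abs_self _
    _ ≤ u i * B := mul_le_mul (ha i hi) (hb i hi) (abs_nonneg _) ((abs_nonneg _).trans (ha i hi))
    _ = B * u i := mul_comm _ _

theorem sum_Icc_one_eq_sum_range_succ {M : Type*} [AddCommMonoid M] (a : ℕ → M) (t : ℕ) :
    ∑ i ∈ Icc 1 t, a i = ∑ i ∈ range t, a (i + 1) := by
  induction t with
  | zero => simp
  | succ t ih => rw [sum_Icc_succ_top (by omega), ih, sum_range_succ]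

/-- The regret against the weights `λ_i` is the lagged regret `Σ C_{λ_i}(θ_{i+1}) − C_{λ_i}(z)`
of the gradient steps plus drift terms in the increments of `λ`. -/
theorem sum_Icc_sub_sum_Icc_eq (a b lam : ℕ → ℝ) (c d : ℝ) (t : ℕ) :
    ∑ i ∈ Icc 1 t, (a i + lam i * b i) - ∑ i ∈ Icc 1 t, (c + lam i * d)
      = ∑ i ∈ range t, ((a (i + 1) + lam i * b (i + 1)) - (c + lam i * d))
        + ∑ i ∈ range t, (lam (i + 1) - lam i) * b (i + 1) - (lam t - lam 0) * d := by
  rw [← sum_range_sub lam, sum_mul, sum_Icc_one_eq_sum_range_succ, sum_Icc_one_eq_sum_range_succ,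
    ← sum_sub_distrib, ← sum_add_distrib, ← sum_sub_distrib]
  refine sum_congr rfl fun i _ => ?_
  ring

theorem eupmu_static_regret_general {n : ℕ}
    (ℓu ℓr : EuclideanSpace ℝ (Fin n) → ℝ)
    (gu gr : EuclideanSpace ℝ (Fin n) → EuclideanSpace ℝ (Fin n))
    (G L B D : ℝ)
    (hcu : ConvexOn ℝ Set.univ ℓu) (hcr : ConvexOn ℝ Set.univ ℓr)
    (hu : ∀ x, HasGradientAt ℓu (gu x) x)
    (hr : ∀ x, HasGradientAt ℓr (gr x) x)
    (hGu : ∀ x y, ‖gu x - gu y‖ ≤ G * ‖x - y‖)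
    (hGr : ∀ x y, ‖gr x - gr y‖ ≤ G * ‖x - y‖)
    (hB : ∀ x, |ℓr x| ≤ B)
    (t : ℕ) (lam β ε : ℕ → ℝ)
    (hlam : ∀ i ≤ t, lam i ∈ Set.Icc (0 : ℝ) D)
    (hlamstep : ∀ i < t, |lam (i + 1) - lam i| ≤ β i * (G * L + ε i))
    (α : ℝ) (hα : 0 < α) (hαG : α * (1 + D) * G ≤ 1)
    (θ : ℕ → EuclideanSpace ℝ (Fin n))
    (hupd : ∀ i < t, θ (i + 1) = θ i - α • (gu (θ i) + lam i • gr (θ i))) :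
    ∀ θstar : EuclideanSpace ℝ (Fin n),
      ∑ i ∈ Finset.Icc 1 t, (ℓu (θ i) + lam i * ℓr (θ i))
          - ∑ i ∈ Finset.Icc 1 t, (ℓu θstar + lam i * ℓr θstar)
        ≤ B * ∑ i ∈ Finset.range t, β i * (G * L + ε i)
          + (1 / (2 * α)) * ‖θ 0 - θstar‖ ^ 2 + D * B := by
  intro θstar
  have hrate : ∀ i < t, (1 + lam i) * G * α ≤ 1 := by
    intro i hi
    obtain ⟨hl0, hlD⟩ := hlam i hi.le
    rcases le_total 0 G with hG | hG <;> nlinarith [mul_le_mul_of_nonneg_left hlD hα.le]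
  have hlag := sum_sub_le_of_gradient_steps (f := fun i x => ℓu x + lam i * ℓr x)
    (g := fun i x => gu x + lam i • gr x) (C := fun i => (1 + lam i) * G)
    (fun i hi => hcu.add (hcr.smul (hlam i hi.le).1))
    (fun i _ x => (hu x).add_const_mul (hr x) (lam i))
    (fun i hi => norm_add_smul_sub_add_smul_le (hlam i hi.le).1 hGu hGr)
    hα hrate hupd θstar
  have hdrift := sum_mul_le_of_abs_le (s := range t) (b := fun i => ℓr (θ (i + 1)))
    (fun i hi => hlamstep i (mem_range.1 hi)) (fun i _ => hB _)
  have hend : -((lam t - lam 0) * ℓr θstar) ≤ D * B := by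
    obtain ⟨h0, h0D⟩ := hlam 0 t.zero_le
    obtain ⟨ht, htD⟩ := hlam t le_rfl
    calc -((lam t - lam 0) * ℓr θstar) ≤ |lam t - lam 0| * |ℓr θstar| := by
          rw [← abs_mul]; exact neg_le_abs _
      _ ≤ D * B := mul_le_mul (abs_sub_le_of_nonneg_of_le ht htD h0 h0D) (hB _)
          (abs_nonneg _) (h0.trans h0D)
  rw [sum_Icc_sub_sum_Icc_eq (fun i => ℓu (θ i)) (fun i => ℓr (θ i)), one_div_mul_eq_div]
  linarith

/-- Static regret of the EUPMU iterates (paper's Appendix lemma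
for Theorem 2): with `ℓ_u, ℓ_r` convex, differentiable and `G`-smooth,
`|ℓ_r| ≤ B`, `λ_i ∈ [0, D]` with `|λ_{i+1} − λ_i| ≤ β_i(GL + ε_i)`,
`α(1+D)G ≤ 1`, and `θ_{i+1} = θ_i − α∇C_{λ_i}(θ_i)` where
`C_λ(θ) = ℓ_u(θ) + λ ℓ_r(θ)`, for every `θ*`:
`Σ_{i=1}^t C_{λ_i}(θ_i) − Σ_{i=1}^t C_{λ_i}(θ*)
  ≤ B Σ_{i=0}^{t−1} β_i(GL + ε_i) + ‖θ_0 − θ*‖²/(2α) + DB`. -/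
theorem eupmu_static_regret {n : ℕ}
    (ℓu ℓr : EuclideanSpace ℝ (Fin n) → ℝ)
    (gu gr : EuclideanSpace ℝ (Fin n) → EuclideanSpace ℝ (Fin n))
    (G L B D : ℝ) (hD : 0 < D)
    (hcu : ConvexOn ℝ Set.univ ℓu) (hcr : ConvexOn ℝ Set.univ ℓr)
    (hu : ∀ x, HasGradientAt ℓu (gu x) x)
    (hr : ∀ x, HasGradientAt ℓr (gr x) x)
    (hGu : ∀ x y, ‖gu x - gu y‖ ≤ G * ‖x - y‖)
    (hGr : ∀ x y, ‖gr x - gr y‖ ≤ G * ‖x - y‖)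
    (hB : ∀ x, |ℓr x| ≤ B)
    (t : ℕ) (ht : 1 ≤ t) (lam β ε : ℕ → ℝ)
    (hlam : ∀ i ≤ t, lam i ∈ Set.Icc (0 : ℝ) D)
    (hβ : ∀ i < t, 0 ≤ β i) (hε : ∀ i < t, 0 ≤ ε i)
    (hlamstep : ∀ i < t, |lam (i + 1) - lam i| ≤ β i * (G * L + ε i))
    (α : ℝ) (hα : 0 < α) (hαG : α * (1 + D) * G ≤ 1)
    (θ : ℕ → EuclideanSpace ℝ (Fin n))
    (hupd : ∀ i < t, θ (i + 1) = θ i - α • (gu (θ i) + lam i • gr (θ i))) :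
    ∀ θstar : EuclideanSpace ℝ (Fin n),
      ∑ i ∈ Finset.Icc 1 t, (ℓu (θ i) + lam i * ℓr (θ i))
          - ∑ i ∈ Finset.Icc 1 t, (ℓu θstar + lam i * ℓr θstar)
        ≤ B * ∑ i ∈ Finset.range t, β i * (G * L + ε i)
          + (1 / (2 * α)) * ‖θ 0 - θstar‖ ^ 2 + D * B :=
  eupmu_static_regret_general ℓu ℓr gu gr G L B D hcu hcr hu hr hGu hGr hB t lam β ε hlam hlamstep α
    hα hαG θ hupd
end

section
/- Let ℓ_u, ℓ_r : ℝ^n → ℝ with |ℓ_r(θ)| ≤ B for all θ. Let t ≥ 1 and λ_1, …, λ_t ≥ 0, and set λ̄ = (1/t) Σ_{i=1}^{t} λ_i. Define C_λ(θ) = ℓ_u(θ) + λ ℓ_r(θ). Suppose θ* ∈ ℝ^n minimizes θ ↦ Σ_{i=1}^{t} C_{λ_i}(θ) over ℝ^n, and for each i, θ*_i ∈ ℝ^n minimizes C_{λ_i} over ℝ^n. Then Σ_{i=1}^{t} C_{λ_i}(θ*) − Σ_{i=1}^{t} C_{λ_i}(θ*_i) ≤ B Σ_{i=1}^{t} |λ̄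 − λ_i|. -/
/-!
Since `C_λ(θ)` is affine in `λ`, the sum `Σ_i C_{λ_i}` equals `t · C_λ̄`, so `θ*` minimizes
`C_λ̄`. Comparing with each `θ*_i` then costs
`C_λ̄(θ*) - C_{λ_i}(θ*_i) ≤ C_λ̄(θ*_i) - C_{λ_i}(θ*_i) = (λ̄ - λ_i) ℓ_r(θ*_i) ≤ B |λ̄ - λ_i|`.
-/

open Finset

def compositeLoss {α : Type*} (ℓu ℓr : α → ℝ) (c : ℝ) (θ : α) : ℝ := ℓu θ + c * ℓr θ

namespace compositeLoss

variable {α ι : Type*} {ℓu ℓr : α → ℝ}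

lemma sub_le_mul_abs_sub {c d B : ℝ} {θ θ' : α}
    (hmin : compositeLoss ℓu ℓr c θ ≤ compositeLoss ℓu ℓr c θ') (hB : |ℓr θ'| ≤ B) :
    compositeLoss ℓu ℓr c θ - compositeLoss ℓu ℓr d θ' ≤ B * |c - d| := by
  have hshift : compositeLoss ℓu ℓr c θ' - compositeLoss ℓu ℓr d θ' = (c - d) * ℓr θ' := by
    unfold compositeLoss; ring
  have hbound : (c - d) * ℓr θ' ≤ B * |c - d| :=
    calc (c - d) * ℓr θ' ≤ |c - d| * |ℓr θ'| := (le_abs_self _).trans (abs_mul _ _).le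
      _ ≤ |c - d| * B := mul_le_mul_of_nonneg_left hB (abs_nonneg _)
      _ = B * |c - d| := mul_comm _ _
  linarith

lemma sum_eq_card_mul {s : Finset ι} {lam : ι → ℝ} {μ : ℝ} (hμ : #s * μ = ∑ i ∈ s, lam i)
    (θ : α) : ∑ i ∈ s, compositeLoss ℓu ℓr (lam i) θ = #s * compositeLoss ℓu ℓr μ θ := by
  simp only [compositeLoss, sum_add_distrib, sum_const, nsmul_eq_mul, ← sum_mul, ← hμ]
  ring

lemma le_of_sum_le {s : Finset ι} (hs : s.Nonempty) {lam : ι → ℝ} {μ : ℝ}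
    (hμ : #s * μ = ∑ i ∈ s, lam i) {θ : α}
    (hmin : ∀ θ', ∑ i ∈ s, compositeLoss ℓu ℓr (lam i) θ ≤
      ∑ i ∈ s, compositeLoss ℓu ℓr (lam i) θ') (θ' : α) :
    compositeLoss ℓu ℓr μ θ ≤ compositeLoss ℓu ℓr μ θ' := by
  have h := hmin θ'
  rw [sum_eq_card_mul hμ, sum_eq_card_mul hμ] at h
  exact le_of_mul_le_mul_left h (by exact_mod_cast hs.card_pos)

end compositeLoss

theorem static_dynamic_comparator_gap_general {n : ℕ}
    (ℓu ℓr : EuclideanSpace ℝ (Fin n) → ℝ) (B : ℝ)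
    (hB : ∀ x, |ℓr x| ≤ B)
    (t : ℕ) (ht : 1 ≤ t) (lam : ℕ → ℝ)
    (θstar : EuclideanSpace ℝ (Fin n))
    (θi : ℕ → EuclideanSpace ℝ (Fin n))
    (hstar : ∀ θ : EuclideanSpace ℝ (Fin n),
      ∑ i ∈ Finset.Icc 1 t, (ℓu θstar + lam i * ℓr θstar)
        ≤ ∑ i ∈ Finset.Icc 1 t, (ℓu θ + lam i * ℓr θ)) :
    ∑ i ∈ Finset.Icc 1 t, (ℓu θstar + lam i * ℓr θstar)
        - ∑ i ∈ Finset.Icc 1 t, (ℓu (θi i) + lam i * ℓr (θi i))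
      ≤ B * ∑ i ∈ Finset.Icc 1 t,
          |(1 / (t : ℝ)) * (∑ j ∈ Finset.Icc 1 t, lam j) - lam i| := by
  set μ := (1 / (t : ℝ)) * ∑ j ∈ Icc 1 t, lam j
  have hs : (Icc 1 t).Nonempty := nonempty_Icc.2 ht
  have hμ : (#(Icc 1 t) : ℝ) * μ = ∑ j ∈ Icc 1 t, lam j := by
    simp only [Nat.card_Icc, add_tsub_cancel_right, μ]
    field_simp [(show (0 : ℝ) < t by exact_mod_cast ht).ne']
  have hmean := compositeLoss.le_of_sum_le hs hμ hstar
  calc _ = #(Icc 1 t) * compositeLoss ℓu ℓr μ θstar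
          - ∑ i ∈ Icc 1 t, compositeLoss ℓu ℓr (lam i) (θi i) := by
        rw [← compositeLoss.sum_eq_card_mul hμ]; rfl
    _ = ∑ i ∈ Icc 1 t,
          (compositeLoss ℓu ℓr μ θstar - compositeLoss ℓu ℓr (lam i) (θi i)) := by
        rw [sum_sub_distrib, sum_const, nsmul_eq_mul]
    _ ≤ ∑ i ∈ Icc 1 t, B * |μ - lam i| :=
        sum_le_sum fun i _ => compositeLoss.sub_le_mul_abs_sub (hmean _) (hB _)
    _ = _ := (mul_sum _ _ _).symm

/-- Stability lemma: with `|ℓ_r| ≤ B`, `λ_i ≥ 0`, mean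
`λ̄ = (1/t)Σ λ_i`, `θ*` a minimizer of `Σ_i C_{λ_i}` and `θ*_i` a minimizer of
`C_{λ_i}` (where `C_λ = ℓ_u + λ ℓ_r`), one has
`Σ_i C_{λ_i}(θ*) − Σ_i C_{λ_i}(θ*_i) ≤ B Σ_i |λ̄ − λ_i|`. -/
theorem static_dynamic_comparator_gap {n : ℕ}
    (ℓu ℓr : EuclideanSpace ℝ (Fin n) → ℝ) (B : ℝ)
    (hB : ∀ x, |ℓr x| ≤ B)
    (t : ℕ) (ht : 1 ≤ t) (lam : ℕ → ℝ)
    (hlam : ∀ i, 1 ≤ i → i ≤ t → 0 ≤ lam i)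
    (θstar : EuclideanSpace ℝ (Fin n))
    (θi : ℕ → EuclideanSpace ℝ (Fin n))
    (hstar : ∀ θ : EuclideanSpace ℝ (Fin n),
      ∑ i ∈ Finset.Icc 1 t, (ℓu θstar + lam i * ℓr θstar)
        ≤ ∑ i ∈ Finset.Icc 1 t, (ℓu θ + lam i * ℓr θ))
    (hi : ∀ i, 1 ≤ i → i ≤ t → ∀ θ : EuclideanSpace ℝ (Fin n),
      ℓu (θi i) + lam i * ℓr (θi i) ≤ ℓu θ + lam i * ℓr θ) :
    ∑ i ∈ Finset.Icc 1 t, (ℓu θstar + lam i * ℓr θstar)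
        - ∑ i ∈ Finset.Icc 1 t, (ℓu (θi i) + lam i * ℓr (θi i))
      ≤ B * ∑ i ∈ Finset.Icc 1 t,
          |(1 / (t : ℝ)) * (∑ j ∈ Finset.Icc 1 t, lam j) - lam i| :=
  static_dynamic_comparator_gap_general ℓu ℓr B hB t ht lam θstar θi hstar
end

section
/- Let t ≥ 1 and let λ_1, …, λ_t be real numbers with mean λ̄ = (1/t) Σ_{j=1}^{t} λ_j. Then Σ_{i=1}^{t} |λ̄ − λ_i| ≤ 2 Σ_{l=1}^{t−1} l · |λ_l − λ_{l+1}|. -/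
/-!
Compare every `λ_i` with the last value `λ_t`. By the triangle inequality through `λ_t`, the
mean deviation is at most twice `Σ_i |λ_i - λ_t|`. Telescoping bounds `|λ_i - λ_t|` by
`Σ_{i ≤ l < t} |λ_l - λ_{l+1}|`, and each difference `|λ_l - λ_{l+1}|` occurs for exactly the
`l` indices `i ≤ l`.
-/

open Finset

namespace Finset

theorem sum_norm_mean_sub_le {ι E : Type*} [SeminormedAddCommGroup E] [NormedSpace ℝ E]
    (s : Finset ι) (f : ι → E) (c : E) :
    ∑ i ∈ s, ‖(#s : ℝ)⁻¹ • ∑ j ∈ s, f j - f i‖ ≤ 2 * ∑ i ∈ s, ‖f i - c‖ := by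
  set m := (#s : ℝ)⁻¹ • ∑ j ∈ s, f j
  have hmean : #s * ‖m - c‖ ≤ ∑ i ∈ s, ‖f i - c‖ := by
    rcases s.eq_empty_or_nonempty with rfl | hs
    · simp
    have hcard : (#s : ℝ) ≠ 0 := by exact_mod_cast hs.card_ne_zero
    have : (#s : ℝ) • (m - c) = ∑ i ∈ s, (f i - c) := by
      rw [smul_sub, smul_inv_smul₀ hcard, sum_sub_distrib, sum_const, Nat.cast_smul_eq_nsmul]
    calc (#s : ℝ) * ‖m - c‖ = ‖∑ i ∈ s, (f i - c)‖ := by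
          rw [← this, norm_smul, Real.norm_natCast]
      _ ≤ ∑ i ∈ s, ‖f i - c‖ := norm_sum_le _ _
  calc ∑ i ∈ s, ‖m - f i‖ ≤ ∑ i ∈ s, (‖m - c‖ + ‖f i - c‖) :=
        sum_le_sum fun i _ => (norm_sub_le_norm_sub_add_norm_sub m c (f i)).trans_eq
          (by rw [norm_sub_rev c])
    _ = #s * ‖m - c‖ + ∑ i ∈ s, ‖f i - c‖ := by
        rw [sum_add_distrib, sum_const, nsmul_eq_mul]
    _ ≤ 2 * ∑ i ∈ s, ‖f i - c‖ := by linarith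

theorem sum_Icc_sum_Ico_eq_sum_nsmul {M : Type*} [AddCommMonoid M] (t : ℕ) (g : ℕ → M) :
    ∑ i ∈ Icc 1 t, ∑ l ∈ Ico i t, g l = ∑ l ∈ Ico 1 t, l • g l := by
  rw [sum_comm' (t' := Ico 1 t) (s' := fun l => Icc 1 l)]
  · simp
  · intro i l
    simp only [mem_Icc, mem_Ico]
    omega

end Finset

theorem mean_deviation_le_weighted_consecutive_variation_general
    (t : ℕ) (lam : ℕ → ℝ) :
    ∑ i ∈ Finset.Icc 1 t,
        |(1 / (t : ℝ)) * (∑ j ∈ Finset.Icc 1 t, lam j) - lam i|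
      ≤ 2 * ∑ l ∈ Finset.Icc 1 (t - 1), (l : ℝ) * |lam l - lam (l + 1)| := by
  have hcard : #(Icc 1 t) = t := by simp
  have hIco : Ico 1 t = Icc 1 (t - 1) := by ext; simp only [mem_Icc, mem_Ico]; omega
  have hmean := sum_norm_mean_sub_le (Icc 1 t) lam (lam t)
  simp only [hcard, Real.norm_eq_abs, smul_eq_mul, ← one_div] at hmean
  refine hmean.trans (mul_le_mul_of_nonneg_left ?_ zero_le_two)
  calc ∑ i ∈ Icc 1 t, |lam i - lam t|
      ≤ ∑ i ∈ Icc 1 t, ∑ l ∈ Ico i t, |lam l - lam (l + 1)| :=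
        sum_le_sum fun i hi => by
          simpa only [Real.dist_eq] using dist_le_Ico_sum_dist lam (mem_Icc.1 hi).2
    _ = ∑ l ∈ Icc 1 (t - 1), (l : ℝ) * |lam l - lam (l + 1)| := by
        rw [sum_Icc_sum_Ico_eq_sum_nsmul, hIco]
        simp only [nsmul_eq_mul]

/-- For real numbers `λ_1, …, λ_t` with mean
`λ̄ = (1/t)Σ_{j=1}^t λ_j`, one has
`Σ_{i=1}^t |λ̄ − λ_i| ≤ 2 Σ_{l=1}^{t−1} l·|λ_l − λ_{l+1}|`. -/
theorem mean_deviation_le_weighted_consecutive_variation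
    (t : ℕ) (ht : 1 ≤ t) (lam : ℕ → ℝ) :
    ∑ i ∈ Finset.Icc 1 t,
        |(1 / (t : ℝ)) * (∑ j ∈ Finset.Icc 1 t, lam j) - lam i|
      ≤ 2 * ∑ l ∈ Finset.Icc 1 (t - 1), (l : ℝ) * |lam l - lam (l + 1)| :=
  mean_deviation_le_weighted_consecutive_variation_general t lam
end
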